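/- Let E and F be Banach spaces over 𝕜 (= ℝ or ℂ), m, n, k ≥ 1, and let P ∈ 𝒫(^mE;F) have finite rank, i.e. the linear span of the range of P is finite dimensional. Then Δ_k^n P is a polynomial of finite type: there are finitely many continuous linear functionals ψ_{i,1}, …, ψ_{i,n} on the Banach space 𝒫(^kF) and polynomials R_i ∈ 𝒫(^{mnk}E), i = 1, …, N, such that (Δ_k^n P)(q) = Σ_{i=1}^N ψ_{i,1}(q) ⋯ ψ_{i,n}(q) · R_i for every q ∈ 𝒫(^kF). -/

import Mathlib

open scoped NNReal ENNReal

/-- `P : E → F` is a continuous `m`-homogeneous polynomial: it is generated by a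
continuous `m`-linear map. -/
def IsHomPoly (𝕜 : Type*) [RCLike 𝕜] (m : ℕ) {E F : Type*}
    [NormedAddCommGroup E] [NormedSpace 𝕜 E] [NormedAddCommGroup F] [NormedSpace 𝕜 F]
    (P : E → F) : Prop :=
  ∃ A : ContinuousMultilinearMap 𝕜 (fun _ : Fin m => E) F, ∀ x, P x = A (fun _ => x)

/-- The sup norm over the closed unit ball. -/
noncomputable def polyNorm {E F : Type*} [Norm E] [Norm F] (P : E → F) : ℝ :=
  sSup ((fun x => ‖P x‖) '' {x : E | ‖x‖ ≤ 1})

/-- The space `𝒫(^m E; F)` of continuous `m`-homogeneous polynomials. -/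
structure HPoly (𝕜 : Type*) [RCLike 𝕜] (m : ℕ) (E F : Type*)
    [NormedAddCommGroup E] [NormedSpace 𝕜 E] [NormedAddCommGroup F] [NormedSpace 𝕜 F] where
  toFun : E → F
  isPoly' : IsHomPoly 𝕜 m toFun

namespace HPoly

variable {𝕜 : Type*} [RCLike 𝕜] {m : ℕ} {E F : Type*}
  [NormedAddCommGroup E] [NormedSpace 𝕜 E] [NormedAddCommGroup F] [NormedSpace 𝕜 F]

instance : FunLike (HPoly 𝕜 m E F) E F where
  coe P := P.toFun
  coe_injective := by rintro ⟨f, hf⟩ ⟨g, hg⟩ h; simpa using h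

@[ext] theorem ext {P Q : HPoly 𝕜 m E F} (h : ∀ x, P x = Q x) : P = Q := DFunLike.ext _ _ h

theorem isPoly (P : HPoly 𝕜 m E F) : IsHomPoly 𝕜 m ⇑P := P.isPoly'

instance : Zero (HPoly 𝕜 m E F) := ⟨⟨fun _ => 0, ⟨0, by simp⟩⟩⟩

@[simp] theorem zero_apply (x : E) : (0 : HPoly 𝕜 m E F) x = 0 := rfl

instance : Add (HPoly 𝕜 m E F) :=
  ⟨fun P Q => ⟨fun x => P x + Q x, by
    obtain ⟨A, hA⟩ := P.isPoly'
    obtain ⟨B, hB⟩ := Q.isPoly'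
    refine ⟨A + B, fun x => ?_⟩
    show P.toFun x + Q.toFun x = (A + B) fun _ => x
    rw [ContinuousMultilinearMap.add_apply, hA x, hB x]⟩⟩

@[simp] theorem add_apply (P Q : HPoly 𝕜 m E F) (x : E) : (P + Q) x = P x + Q x := rfl

instance : Neg (HPoly 𝕜 m E F) :=
  ⟨fun P => ⟨fun x => -P x, by
    obtain ⟨A, hA⟩ := P.isPoly'
    refine ⟨-A, fun x => ?_⟩
    show -P.toFun x = (-A) fun _ => x
    rw [ContinuousMultilinearMap.neg_apply, hA x]⟩⟩

@[simp] theorem neg_apply (P : HPoly 𝕜 m E F) (x : E) : (-P) x = -P x := rfl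

instance : SMul 𝕜 (HPoly 𝕜 m E F) :=
  ⟨fun c P => ⟨fun x => c • P x, by
    obtain ⟨A, hA⟩ := P.isPoly'
    refine ⟨c • A, fun x => ?_⟩
    show c • P.toFun x = (c • A) fun _ => x
    rw [ContinuousMultilinearMap.smul_apply, hA x]⟩⟩

@[simp] theorem smul_apply (c : 𝕜) (P : HPoly 𝕜 m E F) (x : E) : (c • P) x = c • P x := rfl

instance : AddCommGroup (HPoly 𝕜 m E F) where
  add_assoc P Q R := by ext x; simp [add_assoc]
  zero_add P := by ext x; simp
  add_zero P := by ext x; simp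
  add_comm P Q := by ext x; simp [add_comm]
  neg_add_cancel P := by ext x; simp
  nsmul := nsmulRec
  zsmul := zsmulRec

instance : Module 𝕜 (HPoly 𝕜 m E F) where
  one_smul P := by ext x; simp
  mul_smul a b P := by ext x; simp [mul_smul]
  smul_zero a := by ext x; simp
  smul_add a P Q := by ext x; simp
  add_smul a b P := by ext x; simp [add_smul]
  zero_smul P := by ext x; simp

theorem bddAbove_image (P : HPoly 𝕜 m E F) :
    BddAbove ((fun x => ‖P x‖) '' {x : E | ‖x‖ ≤ 1}) := by
  obtain ⟨A, hA⟩ := P.isPoly'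
  refine ⟨‖A‖, ?_⟩
  rintro r ⟨x, hx, rfl⟩
  show ‖P.toFun x‖ ≤ ‖A‖
  rw [hA x]
  calc ‖A fun _ => x‖ ≤ ‖A‖ * ∏ _i : Fin m, ‖x‖ := A.le_opNorm _
    _ ≤ ‖A‖ * 1 := by
        refine mul_le_mul_of_nonneg_left ?_ (norm_nonneg A)
        rw [Finset.prod_const]
        exact pow_le_one₀ (norm_nonneg x) hx
    _ = ‖A‖ := mul_one _

theorem polyNorm_coe_nonneg (P : HPoly 𝕜 m E F) : 0 ≤ polyNorm ⇑P :=
  le_trans (norm_nonneg (P 0)) (le_csSup (bddAbove_image P) ⟨0, by simp, rfl⟩)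

noncomputable instance : NormedAddCommGroup (HPoly 𝕜 m E F) :=
  AddGroupNorm.toNormedAddCommGroup
    { toFun := fun P => polyNorm (⇑P)
      map_zero' := by
        simp only [polyNorm]
        have h : (fun x : E => ‖(0 : HPoly 𝕜 m E F) x‖) '' {x : E | ‖x‖ ≤ 1} = {0} := by
          apply Set.eq_singleton_iff_nonempty_unique_mem.2
          constructor
          · exact ⟨0, ⟨0, by simp, by simp⟩⟩
          · rintro r ⟨x, -, rfl⟩; simp
        rw [h, csSup_singleton]
      add_le' := fun P Q => by
        apply Real.sSup_le
        · rintro r ⟨x, hx, rfl⟩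
          calc ‖(P + Q) x‖ ≤ ‖P x‖ + ‖Q x‖ := norm_add_le _ _
            _ ≤ polyNorm ⇑P + polyNorm ⇑Q :=
                add_le_add (le_csSup (bddAbove_image P) ⟨x, hx, rfl⟩)
                  (le_csSup (bddAbove_image Q) ⟨x, hx, rfl⟩)
        · exact add_nonneg (polyNorm_coe_nonneg P) (polyNorm_coe_nonneg Q)
      neg' := fun P => by simp [polyNorm]
      eq_zero_of_map_eq_zero' := fun P h => by
        have h' : polyNorm ⇑P = 0 := h
        have hball : ∀ x : E, ‖x‖ ≤ 1 → P x = 0 := by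
          intro x hx
          have h1 : ‖P x‖ ≤ polyNorm ⇑P := le_csSup (bddAbove_image P) ⟨x, hx, rfl⟩
          rw [h'] at h1
          exact norm_le_zero_iff.1 h1
        ext x
        rcases eq_or_ne x 0 with rfl | hx
        · simpa using hball 0 (by simp)
        · obtain ⟨A, hA⟩ := P.isPoly'
          set c : 𝕜 := ((‖x‖ : ℝ) : 𝕜) with hcdef
          have hc : c ≠ 0 := by
            simp only [hcdef, ne_eq, RCLike.ofReal_eq_zero]
            exact norm_ne_zero_iff.2 hx
          have hu : ‖(c⁻¹ • x : E)‖ ≤ 1 := by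
            rw [norm_smul, norm_inv, hcdef, RCLike.norm_ofReal,
              abs_of_nonneg (norm_nonneg x),
              inv_mul_cancel₀ (norm_ne_zero_iff.2 hx)]
          have h0 : P (c⁻¹ • x) = 0 := hball _ hu
          have key : P x = c ^ m • P (c⁻¹ • x) := by
            show P.toFun x = c ^ m • P.toFun (c⁻¹ • x)
            rw [hA x, hA (c⁻¹ • x)]
            have h2 := A.map_smul_univ (fun _ : Fin m => c) (fun _ : Fin m => c⁻¹ • x)
            rw [Finset.prod_const] at h2
            have h3 : (fun _ : Fin m => c • c⁻¹ • x) = fun _ : Fin m => x := by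
              funext i
              rw [smul_smul, mul_inv_cancel₀ hc, one_smul]
            rw [h3] at h2
            simpa using h2
          rw [key, h0, smul_zero]
          simp }

theorem norm_def (P : HPoly 𝕜 m E F) : ‖P‖ = polyNorm ⇑P := rfl

noncomputable instance : NormedSpace 𝕜 (HPoly 𝕜 m E F) :=
  { (inferInstance : Module 𝕜 (HPoly 𝕜 m E F)) with
    norm_smul_le := fun c P => by
      show polyNorm ⇑(c • P) ≤ ‖c‖ * polyNorm ⇑P
      apply Real.sSup_le
      · rintro r ⟨x, hx, rfl⟩
        show ‖(c • P) x‖ ≤ _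
        rw [smul_apply, norm_smul]
        exact mul_le_mul_of_nonneg_left
          (le_csSup (bddAbove_image P) ⟨x, hx, rfl⟩) (norm_nonneg c)
      · exact mul_nonneg (norm_nonneg c) (polyNorm_coe_nonneg P) }

end HPoly

/-! Choosing a basis `b₁, …, b_d` of the span of the range of `P` and extending the coordinate
functionals to `F` by Hahn–Banach writes `P = ∑ₜ μₜ • bₜ` with `μₜ ∈ 𝒫(^mE)`. Multilinearity then
puts every `q ∘ P`, `q ∈ 𝒫(^kF)`, in the finite-dimensional span of the products
`μ_{j₁} ⋯ μ_{jₖ}`, which are `(k m)`-homogeneous. So `q ↦ q ∘ P` is a linear map of finite rank,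
and the coordinates of `q ∘ P` in a basis `g₁, …, g_N` of its range are continuous in `q`, because
point evaluations are. Expanding the `n`-th power of `q ∘ P = ∑ᵣ ψᵣ(q) gᵣ` gives the claim. -/

theorem ContinuousMultilinearMap.map_diag_sum_smul {𝕜 F G κ ι : Type*} [RCLike 𝕜]
    [NormedAddCommGroup F] [NormedSpace 𝕜 F] [NormedAddCommGroup G] [NormedSpace 𝕜 G]
    [Fintype κ] [DecidableEq κ] [Fintype ι] (A : ContinuousMultilinearMap 𝕜 (fun _ : κ => F) G)
    (c : ι → 𝕜) (b : ι → F) :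
    A (fun _ => ∑ t, c t • b t) = ∑ j : κ → ι, (∏ i, c (j i)) • A (fun i => b (j i)) := by
  rw [A.map_sum]
  exact Finset.sum_congr rfl fun j _ => A.map_smul_univ (fun i => c (j i)) (fun i => b (j i))

namespace IsHomPoly

variable {𝕜 : Type*} [RCLike 𝕜] {E F : Type*}
  [NormedAddCommGroup E] [NormedSpace 𝕜 E] [NormedAddCommGroup F] [NormedSpace 𝕜 F]

theorem map_smul {k : ℕ} {f : E → F} (hf : IsHomPoly 𝕜 k f) (c : 𝕜) (x : E) :
    f (c • x) = c ^ k • f x := by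
  obtain ⟨A, hA⟩ := hf
  simpa [hA] using A.map_smul_univ (fun _ => c) (fun _ => x)

theorem continuousLinearMap_comp {m : ℕ} {P : E → F} (hP : IsHomPoly 𝕜 m P) (ℓ : F →L[𝕜] 𝕜) :
    IsHomPoly 𝕜 m (fun x => ℓ (P x)) := by
  obtain ⟨A, hA⟩ := hP
  exact ⟨ℓ.compContinuousMultilinearMap A, fun x => by simp [hA]⟩

theorem mul {a b : ℕ} {f g : E → 𝕜} (hf : IsHomPoly 𝕜 a f) (hg : IsHomPoly 𝕜 b g) :
    IsHomPoly 𝕜 (a + b) (fun x => f x * g x) := by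
  obtain ⟨A, hA⟩ := hf
  obtain ⟨B, hB⟩ := hg
  exact ⟨(A.smulRight B).uncurrySum.domDomCongr finSumFinEquiv, fun x => by
    simp [hA, hB, ContinuousMultilinearMap.uncurrySum_apply, Function.comp_def]⟩

theorem finset_prod {e : ℕ} {ι : Type*} (s : Finset ι) {f : ι → E → 𝕜}
    (hf : ∀ i ∈ s, IsHomPoly 𝕜 e (f i)) :
    IsHomPoly 𝕜 (s.card * e) (fun x => ∏ i ∈ s, f i x) := by
  classical
  induction s using Finset.induction with
  | empty =>
    simp only [Finset.card_empty, zero_mul, Finset.prod_empty]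
    exact ⟨ContinuousMultilinearMap.constOfIsEmpty 𝕜 _ 1, by simp⟩
  | insert i s hi ih =>
    have h := (hf i (s.mem_insert_self i)).mul (ih fun j hj => hf j (Finset.mem_insert_of_mem hj))
    simp only [Finset.prod_insert hi, Finset.card_insert_of_notMem hi]
    convert h using 1
    ring

theorem exists_sum_smul_of_finiteDimensional {m : ℕ} {P : E → F}
    (hP : IsHomPoly 𝕜 m P) [FiniteDimensional 𝕜 (Submodule.span 𝕜 (Set.range P))] :
    ∃ (d : ℕ) (μ : Fin d → E → 𝕜) (b : Fin d → F),
      (∀ t, IsHomPoly 𝕜 m (μ t)) ∧ ∀ x, P x = ∑ t, μ t x • b t := by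
  set V := Submodule.span 𝕜 (Set.range P)
  let b := Module.finBasis 𝕜 V
  choose ℓ hℓ _ using fun t =>
    exists_extension_norm_eq V (LinearMap.toContinuousLinearMap (b.coord t))
  refine ⟨_, fun t x => ℓ t (P x), fun t => b t, fun t => hP.continuousLinearMap_comp _,
    fun x => ?_⟩
  have hx : P x ∈ V := Submodule.subset_span ⟨x, rfl⟩
  calc P x = ((⟨P x, hx⟩ : V) : F) := rfl
    _ = ∑ t, b.repr ⟨P x, hx⟩ t • (b t : F) := by
      conv_lhs => rw [← b.sum_repr ⟨P x, hx⟩]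
      simp only [AddSubmonoidClass.coe_finsetSum, Submodule.coe_smul]
    _ = ∑ t, ℓ t (P x) • (b t : F) := by
      simp [hℓ _ ⟨P x, hx⟩]

end IsHomPoly

def homPolySubmodule (𝕜 : Type*) [RCLike 𝕜] (k : ℕ) (E F : Type*)
    [NormedAddCommGroup E] [NormedSpace 𝕜 E] [NormedAddCommGroup F] [NormedSpace 𝕜 F] :
    Submodule 𝕜 (E → F) where
  carrier := {f | IsHomPoly 𝕜 k f}
  zero_mem' := ⟨0, by simp⟩
  add_mem' := by
    rintro f g ⟨A, hA⟩ ⟨B, hB⟩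
    exact ⟨A + B, fun x => by simp [hA, hB]⟩
  smul_mem' := by
    rintro c f ⟨A, hA⟩
    exact ⟨c • A, fun x => by simp [hA]⟩

@[simp] theorem mem_homPolySubmodule {𝕜 : Type*} [RCLike 𝕜] {k : ℕ} {E F : Type*}
    [NormedAddCommGroup E] [NormedSpace 𝕜 E] [NormedAddCommGroup F] [NormedSpace 𝕜 F]
    {f : E → F} : f ∈ homPolySubmodule 𝕜 k E F ↔ IsHomPoly 𝕜 k f := Iff.rfl

namespace HPoly

variable {𝕜 : Type*} [RCLike 𝕜] {X E F : Type*}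
  [NormedAddCommGroup E] [NormedSpace 𝕜 E] [NormedAddCommGroup F] [NormedSpace 𝕜 F] {k : ℕ}

@[simp] theorem mk_apply (f : E → F) (hf : IsHomPoly 𝕜 k f) (x : E) :
    (⟨f, hf⟩ : HPoly 𝕜 k E F) x = f x := rfl

-- Scaling by `‖x‖ + 1` instead of `‖x‖` avoids a separate case `x = 0`.
theorem norm_apply_le (q : HPoly 𝕜 k E F) (x : E) : ‖q x‖ ≤ (‖x‖ + 1) ^ k * ‖q‖ := by
  set c : 𝕜 := ((‖x‖ + 1 : ℝ) : 𝕜)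
  have hc : ‖c‖ = ‖x‖ + 1 := by
    simp only [c, RCLike.norm_ofReal]
    exact abs_of_nonneg (by positivity)
  have hc0 : c ≠ 0 := norm_ne_zero_iff.1 (by rw [hc]; positivity)
  have hu : ‖c⁻¹ • x‖ ≤ 1 := by
    rw [norm_smul, norm_inv, hc, inv_mul_le_one₀ (by positivity)]
    linarith
  calc ‖q x‖ = ‖c‖ ^ k * ‖q (c⁻¹ • x)‖ := by
        rw [← norm_pow, ← norm_smul, ← q.isPoly.map_smul, smul_inv_smul₀ hc0]
    _ ≤ (‖x‖ + 1) ^ k * ‖q‖ := by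
        rw [hc]
        gcongr
        exact le_csSup (bddAbove_image q) ⟨_, hu, rfl⟩

theorem continuous_apply (x : E) : Continuous fun q : HPoly 𝕜 k E F => q x :=
  AddMonoidHomClass.continuous_of_bound (AddMonoidHom.mk' (fun q : HPoly 𝕜 k E F => q x)
    fun _ _ => rfl) _ fun q => norm_apply_le q x

def precomp (P : X → F) : HPoly 𝕜 k F 𝕜 →ₗ[𝕜] (X → 𝕜) where
  toFun q x := q (P x)
  map_add' _ _ := rfl
  map_smul' _ _ := rfl

@[simp] theorem precomp_apply (P : X → F) (q : HPoly 𝕜 k F 𝕜) (x : X) :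
    precomp P q x = q (P x) := rfl

theorem range_precomp_le_span {ι : Type*} [Fintype ι] {P : X → F} (μ : ι → X → 𝕜) (b : ι → F)
    (hP : ∀ x, P x = ∑ t, μ t x • b t) :
    LinearMap.range (precomp (k := k) P) ≤
      Submodule.span 𝕜 (Set.range fun j : Fin k → ι => fun x => ∏ i, μ (j i) x) := by
  classical
  rintro _ ⟨q, rfl⟩
  obtain ⟨A, hA⟩ := q.isPoly
  have hexp : precomp P q = ∑ j : Fin k → ι, A (fun i => b (j i)) • fun x => ∏ i, μ (j i) x := by
    funext x
    simp [precomp, hA, hP, A.map_diag_sum_smul, mul_comm]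
  rw [hexp]
  exact Submodule.sum_mem _ fun j _ => Submodule.smul_mem _ _ (Submodule.subset_span ⟨j, rfl⟩)

end HPoly

theorem LinearMap.exists_sum_smul_of_finiteDimensional_range {𝕜 X Y : Type*}
    [NontriviallyNormedField 𝕜] [CompleteSpace 𝕜] [AddCommGroup X] [Module 𝕜 X]
    [TopologicalSpace X] (Φ : X →ₗ[𝕜] (Y → 𝕜)) (hΦ : ∀ y, Continuous fun x => Φ x y)
    [FiniteDimensional 𝕜 (LinearMap.range Φ)] :
    ∃ (N : ℕ) (ψ : Fin N → X →L[𝕜] 𝕜) (g : Fin N → Y → 𝕜),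
      (∀ i, g i ∈ LinearMap.range Φ) ∧ ∀ x, Φ x = ∑ i, ψ i x • g i := by
  let b := Module.finBasis 𝕜 (LinearMap.range Φ)
  have hcont : Continuous Φ.rangeRestrict := (continuous_pi hΦ).subtype_mk _
  refine ⟨_, fun i => ⟨(b.coord i).comp Φ.rangeRestrict,
    (b.coord i).continuous_of_finiteDimensional.comp hcont⟩, fun i => b i, fun i => (b i).2,
    fun x => ?_⟩
  calc Φ x = (Φ.rangeRestrict x : Y → 𝕜) := rfl
    _ = ∑ i, b.repr (Φ.rangeRestrict x) i • (b i : Y → 𝕜) := by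
      conv_lhs => rw [← b.sum_repr (Φ.rangeRestrict x)]
      simp only [AddSubmonoidClass.coe_finsetSum, Submodule.coe_smul]

theorem statement17_general (𝕜 : Type*) [RCLike 𝕜] (E F : Type*)
    [NormedAddCommGroup E] [NormedSpace 𝕜 E]
    [NormedAddCommGroup F] [NormedSpace 𝕜 F]
    (m n k : ℕ)
    (P : E → F) (hP : IsHomPoly 𝕜 m P)
    (hfr : FiniteDimensional 𝕜 (Submodule.span 𝕜 (Set.range P))) :
    ∃ (N : ℕ) (ψ : Fin N → Fin n → (HPoly 𝕜 k F 𝕜 →L[𝕜] 𝕜))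
      (R : Fin N → HPoly 𝕜 (m * n * k) E 𝕜),
      ∀ (q : HPoly 𝕜 k F 𝕜) (x : E), q (P x) ^ n = ∑ i, (∏ j, ψ i j q) * R i x := by
  obtain ⟨d, μ, b, hμ, hPμ⟩ := hP.exists_sum_smul_of_finiteDimensional
  have hrange := HPoly.range_precomp_le_span (k := k) μ b hPμ
  have := FiniteDimensional.span_of_finite 𝕜
    (Set.finite_range fun j : Fin k → Fin d => fun x => ∏ i, μ (j i) x)
  have := Submodule.finiteDimensional_of_le hrange
  obtain ⟨N, ψ, g, hg, hΦ⟩ := LinearMap.exists_sum_smul_of_finiteDimensional_range (𝕜 := 𝕜)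
    (HPoly.precomp (k := k) P) fun x => by simpa using HPoly.continuous_apply (P x)
  have hgpoly : ∀ i, g i ∈ homPolySubmodule 𝕜 (k * m) E 𝕜 := by
    refine fun i => Submodule.span_le.2 ?_ (hrange (hg i))
    rintro _ ⟨j, rfl⟩
    simpa using IsHomPoly.finset_prod Finset.univ fun i _ => hμ (j i)
  let e := Fintype.equivFin (Fin n → Fin N)
  refine ⟨_, fun σ a => ψ (e.symm σ a), fun σ => ⟨fun x => ∏ a, g (e.symm σ a) x, ?_⟩,
    fun q x => ?_⟩
  · convert IsHomPoly.finset_prod Finset.univ fun a _ => hgpoly (e.symm σ a) using 1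
    simp only [Finset.card_univ, Fintype.card_fin]
    ring
  · have hq : q (P x) = ∑ i, ψ i q * g i x := by simpa using congrFun (hΦ q) x
    rw [hq, Fintype.sum_pow, ← e.symm.sum_comp]
    simp [Finset.prod_mul_distrib]

/-- If `P ∈ 𝒫(^mE;F)` has finite rank, then `Δₖⁿ P` is of finite type:
`(Δₖⁿ P) q = ∑ᵢ ψ_{i,1}(q) ⋯ ψ_{i,n}(q) • Rᵢ` for suitable continuous linear functionals
`ψ_{i,j}` on `𝒫(^kF)` and polynomials `Rᵢ ∈ 𝒫(^{mnk}E)`. -/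
theorem statement17 (𝕜 : Type*) [RCLike 𝕜] (E F : Type*)
    [NormedAddCommGroup E] [NormedSpace 𝕜 E] [CompleteSpace E]
    [NormedAddCommGroup F] [NormedSpace 𝕜 F] [CompleteSpace F]
    (m n k : ℕ) (hm : 1 ≤ m) (hn : 1 ≤ n) (hk : 1 ≤ k)
    (P : E → F) (hP : IsHomPoly 𝕜 m P)
    (hfr : FiniteDimensional 𝕜 (Submodule.span 𝕜 (Set.range P))) :
    ∃ (N : ℕ) (ψ : Fin N → Fin n → (HPoly 𝕜 k F 𝕜 →L[𝕜] 𝕜))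
      (R : Fin N → HPoly 𝕜 (m * n * k) E 𝕜),
      ∀ (q : HPoly 𝕜 k F 𝕜) (x : E), q (P x) ^ n = ∑ i, (∏ j, ψ i j q) * R i x :=
  statement17_general 𝕜 E F m n k P hP hfr
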